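/- Let α ≥ 2 be a real number and let P be a finite set of points in the Euclidean plane. Define the Gabriel graph G_P on vertex set P by making distinct points p, q adjacent if and only if for every r ∈ P with r ≠ p and r ≠ q, the angle ∠prq is at most π/2. Then for every closed walk through P (a cyclically ordered finite sequence of points of P that visits every point of P at least once), there exists a closed walk through P all of whose consecutive pairs are adjacent in G_P and whose α-weight is at most the α-weight of the original walk. -/

import Mathlib

open Real EuclideanGeometry

/-- The α-weight of a closed walk given as a list: the sum of `dist p q ^ α` over all
consecutive pairs of the list, cyclically. -/
noncomputable def walkWeight (α : ℝ) (L : List (EuclideanSpace ℝ (Fin 2))) : ℝ :=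
  ∑ i ∈ Finset.range L.length, dist (L.getD i 0) (L.getD ((i + 1) % L.length) 0) ^ α

/-- A closed walk through a finite point set `P`: a nonempty list whose set of entries
is exactly `P` (points may be revisited). -/
def IsClosedWalk (L : List (EuclideanSpace ℝ (Fin 2))) (P : Finset (EuclideanSpace ℝ (Fin 2))) :
    Prop :=
  L ≠ [] ∧ ∀ x, x ∈ L ↔ x ∈ P

/-- Adjacency in the Gabriel graph of `P`: distinct points `p, q` of `P` are adjacent iff
for every other point `r` of `P` the angle ∠prq is at most π/2. -/
def GabrielAdj (P : Finset (EuclideanSpace ℝ (Fin 2))) (p q : EuclideanSpace ℝ (Fin 2)) :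
    Prop :=
  p ≠ q ∧ p ∈ P ∧ q ∈ P ∧ ∀ r ∈ P, r ≠ p → r ≠ q → ∠ p r q ≤ π / 2

/-!
If `p q` is not a Gabriel edge, some `r ∈ P` sees `pq` at an obtuse angle, so
`|pr|² + |rq|² < |pq|²`; for `α ≥ 2` this gives `|pr|^α + |rq|^α ≤ |pq|^α`. Replacing the step
`p → q` by the detour through `r` therefore does not increase the weight, and both new steps are
strictly shorter, so recursing on the number of shorter pairs in `P` turns every step of a walk
into a path of Gabriel edges of no larger weight. The closed walk is read as the open path
starting and ending at its last point.
-/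

local notation "ℝ²" => EuclideanSpace ℝ (Fin 2)

lemma rpow_add_rpow_le_of_sq_add_sq_le {a b c α : ℝ} (hα : 2 ≤ α) (ha : 0 ≤ a) (hb : 0 ≤ b)
    (hc : 0 ≤ c) (h : a ^ 2 + b ^ 2 ≤ c ^ 2) : a ^ α + b ^ α ≤ c ^ α := by
  have hsq : ∀ x : ℝ, 0 ≤ x → x ^ α = (x ^ 2) ^ (α / 2) := fun x hx => by
    rw [← Real.rpow_natCast_mul hx]; congr 1; ring
  rw [hsq a ha, hsq b hb, hsq c hc]
  calc (a ^ 2) ^ (α / 2) + (b ^ 2) ^ (α / 2) ≤ (a ^ 2 + b ^ 2) ^ (α / 2) :=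
        Real.add_rpow_le_rpow_add (by positivity) (by positivity) (by linarith)
    _ ≤ (c ^ 2) ^ (α / 2) := by gcongr

lemma dist_sq_add_dist_sq_lt_of_pi_div_two_lt_angle {V Q : Type*} [NormedAddCommGroup V]
    [InnerProductSpace ℝ V] [MetricSpace Q] [NormedAddTorsor V Q] {p q r : Q}
    (h : π / 2 < ∠ p r q) : dist p r ^ 2 + dist r q ^ 2 < dist p q ^ 2 := by
  have hrp : r ≠ p := by rintro rfl; simp [angle_self_left] at h
  have hrq : r ≠ q := by rintro rfl; simp [angle_self_right] at h
  have hcos : Real.cos (∠ p r q) < 0 :=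
    Real.cos_neg_of_pi_div_two_lt_of_lt h (by linarith [angle_le_pi p r q, Real.pi_pos])
  have hpr : 0 < dist p r := dist_pos.mpr hrp.symm
  have hqr : 0 < dist q r := dist_pos.mpr hrq.symm
  have hlaw := law_cos p r q
  rw [dist_comm r q]
  nlinarith [mul_pos hpr hqr]

section MetricSpace

variable {X : Type*} [PseudoMetricSpace X]

noncomputable def pathWeight (α : ℝ) : List X → ℝ
  | a :: b :: t => dist a b ^ α + pathWeight α (b :: t)
  | _ => 0

lemma pathWeight_eq_sum (α : ℝ) (d : X) : ∀ L : List X,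
    pathWeight α L =
      ∑ i ∈ Finset.range (L.length - 1), dist (L.getD i d) (L.getD (i + 1) d) ^ α
  | [] => by simp [pathWeight]
  | [a] => by simp [pathWeight]
  | a :: b :: t => by
      rw [pathWeight, pathWeight_eq_sum α d (b :: t),
        show (a :: b :: t).length - 1 = t.length + 1 by simp, Finset.sum_range_succ', add_comm]
      simp only [List.getD_cons_succ, List.getD_cons_zero, List.length_cons, Nat.add_sub_cancel]

lemma pathWeight_cons_append (α : ℝ) {r : X} : ∀ (p : X) (M₁ M₂ : List X),
    M₁.getLast? = some r →
    pathWeight α (p :: (M₁ ++ M₂)) = pathWeight α (p :: M₁) + pathWeight α (r :: M₂)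
  | _, [], _, h => by simp at h
  | p, [x], M₂, h => by
      obtain rfl : x = r := by simpa using h
      simp [pathWeight]
  | p, x :: y :: t, M₂, h => by
      have ih := pathWeight_cons_append α x (y :: t) M₂ (by simpa using h)
      simp only [List.cons_append, pathWeight] at ih ⊢
      linarith

noncomputable def closerPairs (P : Finset X) (d : ℝ) : Finset (X × X) :=
  (P ×ˢ P).filter fun z => dist z.1 z.2 < d

lemma card_closerPairs_lt {P : Finset X} {a b : X} {d : ℝ} (ha : a ∈ P) (hb : b ∈ P)
    (h : dist a b < d) : (closerPairs P (dist a b)).card < (closerPairs P d).card := by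
  refine Finset.card_lt_card ⟨fun z hz => ?_, fun hsub => ?_⟩
  · simp only [closerPairs, Finset.mem_filter] at hz ⊢
    exact ⟨hz.1, hz.2.trans h⟩
  · have hab : (a, b) ∈ closerPairs P (dist a b) := hsub (by simp [closerPairs, ha, hb, h])
    simp [closerPairs] at hab

end MetricSpace

lemma List.IsChain.cons_append {X : Type*} {R : X → X → Prop} {p r : X} {M₁ M₂ : List X}
    (h₁ : (p :: M₁).IsChain R) (hr : M₁.getLast? = some r) (h₂ : (r :: M₂).IsChain R) :
    (p :: (M₁ ++ M₂)).IsChain R := by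
  rw [← List.cons_append, List.isChain_append]
  refine ⟨h₁, h₂.tail, fun x hx y hy => ?_⟩
  obtain rfl : x = r := by
    rw [List.getLast?_cons, hr] at hx; simpa using hx.symm
  exact h₂.rel_head? hy

lemma List.rel_getD_succ_mod_of_isChain_getLast_cons {X : Type*} {R : X → X → Prop}
    {L : List X} (hL : L ≠ []) (d : X) (hc : (L.getLast hL :: L).IsChain R) :
    ∀ i < L.length, R (L.getD i d) (L.getD ((i + 1) % L.length) d) := by
  intro i hi
  rcases (show i + 1 ≤ L.length from hi).lt_or_eq with hlt | heq
  · rw [Nat.mod_eq_of_lt hlt, L.getD_eq_getElem d hi, L.getD_eq_getElem d hlt]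
    exact List.isChain_iff_getElem.mp hc.tail i hlt
  · have hlast : L.getD i d = L.getLast hL := by
      rw [L.getD_eq_getElem d hi, List.getLast_eq_getElem]; congr; omega
    rw [heq, Nat.mod_self, hlast]
    obtain ⟨x, t, rfl⟩ := List.exists_cons_of_ne_nil hL
    exact hc.rel_head? rfl

lemma walkWeight_eq_pathWeight_getLast_cons (α : ℝ) {L : List ℝ²} (hL : L ≠ []) :
    walkWeight α L = pathWeight α (L.getLast hL :: L) := by
  obtain ⟨x, t, rfl⟩ := List.exists_cons_of_ne_nil hL
  have hlast : (x :: t).getD t.length 0 = (x :: t).getLast hL := by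
    rw [List.getD_eq_getElem _ _ (by simp), List.getLast_eq_getElem]; rfl
  rw [pathWeight, pathWeight_eq_sum α 0, walkWeight, List.length_cons, Finset.sum_range_succ,
    Nat.mod_self, hlast, add_comm, Nat.add_sub_cancel]
  congr 1
  refine Finset.sum_congr rfl fun i hi => ?_
  rw [Nat.mod_eq_of_lt (by simpa using hi)]

def GabrielStep (P : Finset ℝ²) (p q : ℝ²) : Prop :=
  p = q ∨ GabrielAdj P p q

lemma exists_pi_div_two_lt_angle_of_not_gabrielStep {P : Finset ℝ²} {p q : ℝ²} (hp : p ∈ P)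
    (hq : q ∈ P) (h : ¬GabrielStep P p q) : ∃ r ∈ P, π / 2 < ∠ p r q := by
  by_contra! hr
  exact h (Or.inr ⟨fun hpq => h (Or.inl hpq), hp, hq, fun r hr' _ _ => hr r hr'⟩)

theorem exists_gabriel_path {α : ℝ} (hα : 2 ≤ α) {P : Finset ℝ²} {p q : ℝ²} (hp : p ∈ P)
    (hq : q ∈ P) : ∃ M : List ℝ², M.getLast? = some q ∧ (∀ x ∈ M, x ∈ P) ∧
      (p :: M).IsChain (GabrielStep P) ∧ pathWeight α (p :: M) ≤ dist p q ^ α := by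
  by_cases hstep : GabrielStep P p q
  · exact ⟨[q], rfl, by simpa using hq, List.isChain_pair.mpr hstep, by simp [pathWeight]⟩
  obtain ⟨r, hr, hobtuse⟩ := exists_pi_div_two_lt_angle_of_not_gabrielStep hp hq hstep
  have hsq := dist_sq_add_dist_sq_lt_of_pi_div_two_lt_angle hobtuse
  have hpr : dist p r < dist p q :=
    lt_of_pow_lt_pow_left₀ 2 dist_nonneg (by nlinarith [sq_nonneg (dist r q)])
  have hrq : dist r q < dist p q :=
    lt_of_pow_lt_pow_left₀ 2 dist_nonneg (by nlinarith [sq_nonneg (dist p r)])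
  obtain ⟨M₁, hlast₁, hP₁, hchain₁, hweight₁⟩ := exists_gabriel_path hα hp hr
  obtain ⟨M₂, hlast₂, hP₂, hchain₂, hweight₂⟩ := exists_gabriel_path hα hr hq
  refine ⟨M₁ ++ M₂, ?_, ?_, hchain₁.cons_append hlast₁ hchain₂, ?_⟩
  · rw [List.getLast?_append, hlast₂]; rfl
  · intro x hx
    rcases List.mem_append.mp hx with hx | hx
    exacts [hP₁ x hx, hP₂ x hx]
  · rw [pathWeight_cons_append α p M₁ M₂ hlast₁]
    calc _ ≤ dist p r ^ α + dist r q ^ α := add_le_add hweight₁ hweight₂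
      _ ≤ dist p q ^ α := rpow_add_rpow_le_of_sq_add_sq_le hα dist_nonneg dist_nonneg
          dist_nonneg hsq.le
termination_by (closerPairs P (dist p q)).card
decreasing_by
  · exact card_closerPairs_lt hp hr hpr
  · exact card_closerPairs_lt hr hq hrq

theorem exists_gabriel_walk {α : ℝ} (hα : 2 ≤ α) {P : Finset ℝ²} :
    ∀ (a : ℝ²) (K : List ℝ²), a ∈ P → (∀ x ∈ K, x ∈ P) →
      ∃ M : List ℝ², M.getLast? = K.getLast? ∧ K ⊆ M ∧ (∀ x ∈ M, x ∈ P) ∧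
        (a :: M).IsChain (GabrielStep P) ∧ pathWeight α (a :: M) ≤ pathWeight α (a :: K)
  | _, [], _, _ => ⟨[], rfl, List.nil_subset _, by simp, List.isChain_singleton _, le_rfl⟩
  | a, b :: K, ha, hK => by
      have hb : b ∈ P := hK b List.mem_cons_self
      obtain ⟨M₁, hlast₁, hP₁, hchain₁, hweight₁⟩ := exists_gabriel_path hα ha hb
      obtain ⟨M₂, hlast₂, hKM₂, hP₂, hchain₂, hweight₂⟩ :=
        exists_gabriel_walk hα b K hb fun x hx => hK x (List.mem_cons_of_mem b hx)
      refine ⟨M₁ ++ M₂, ?_, ?_, ?_, hchain₁.cons_append hlast₁ hchain₂, ?_⟩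
      · rw [List.getLast?_append, hlast₂, hlast₁, List.getLast?_cons]
        cases K.getLast? <;> rfl
      · exact List.cons_subset.mpr ⟨List.mem_append_left _ (List.mem_of_getLast? hlast₁),
          List.Subset.trans hKM₂ (List.subset_append_right _ _)⟩
      · intro x hx
        rcases List.mem_append.mp hx with hx | hx
        exacts [hP₁ x hx, hP₂ x hx]
      · rw [pathWeight_cons_append α a M₁ M₂ hlast₁, pathWeight]
        exact add_le_add hweight₁ hweight₂

/-- for α ≥ 2, every closed walk through `P` can be replaced by a closed walk
through `P` that only moves along edges of the Gabriel graph of `P` and whose α-weight is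
no larger. -/
theorem walk_along_gabriel_graph
    (α : ℝ) (hα : 2 ≤ α) (P : Finset (EuclideanSpace ℝ (Fin 2)))
    (L : List (EuclideanSpace ℝ (Fin 2))) (hL : IsClosedWalk L P) :
    ∃ L', IsClosedWalk L' P ∧
      (∀ i < L'.length,
        L'.getD i 0 = L'.getD ((i + 1) % L'.length) 0 ∨
        GabrielAdj P (L'.getD i 0) (L'.getD ((i + 1) % L'.length) 0)) ∧
      walkWeight α L' ≤ walkWeight α L := by
  obtain ⟨hL, hLP⟩ := hL
  obtain ⟨M, hlast, hLM, hMP, hchain, hweight⟩ := exists_gabriel_walk hα (L.getLast hL) L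
    ((hLP _).mp (List.getLast_mem hL)) fun x hx => (hLP x).mp hx
  have hM : M ≠ [] := List.ne_nil_of_mem (hLM (List.getLast_mem hL))
  have hc : M.getLast hM = L.getLast hL := by
    rw [List.getLast?_eq_some_getLast hM, List.getLast?_eq_some_getLast hL] at hlast
    exact Option.some_injective _ hlast
  refine ⟨M, ⟨hM, fun x => ⟨hMP x, fun hx => hLM ((hLP x).mpr hx)⟩⟩,
    List.rel_getD_succ_mod_of_isChain_getLast_cons hM 0 (hc ▸ hchain), ?_⟩
  rw [walkWeight_eq_pathWeight_getLast_cons α hM, walkWeight_eq_pathWeight_getLast_cons α hL, hc]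
  exact hweight
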